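/- arXiv:1210.1171 — 2 statements merged into one kernel-verified Lean document; each statement's English description precedes it below -/
import Mathlib

section
/- Let T₁, T₂ be linear, trace-preserving, positive maps on M_d(ℂ), let ρ₂ be a stationary state of T₂, and set ρ₁ := T₁^∞(ρ₂), a stationary state of T₁. Then ρ₁ − ρ₂ = Z(T₁)((T₁ − T₂)(ρ₂)), where Z(T₁) := (id − (T₁ − T₁^∞))^{-1}. -/
open Matrix Filter
open scoped ComplexOrder

/-- Trace norm (Schatten 1-norm) of a complex matrix: `tr √(XᴴX)`. -/
noncomputable def traceNorm {d : ℕ} (X : Matrix (Fin d) (Fin d) ℂ) : ℝ :=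
  ((Matrix.posSemidef_conjTranspose_mul_self X).1.eigenvectorUnitary.1 *
    diagonal (((↑) : ℝ → ℂ) ∘ (√·) ∘ (Matrix.posSemidef_conjTranspose_mul_self X).1.eigenvalues) *
    (star (Matrix.posSemidef_conjTranspose_mul_self X).1.eigenvectorUnitary :
      Matrix (Fin d) (Fin d) ℂ)).trace.re

/-- Linear endomorphisms of `M_d(ℂ)` (superoperators). -/
abbrev MatEnd (d : ℕ) := Module.End ℂ (Matrix (Fin d) (Fin d) ℂ)

/-- Trace-preserving map. -/
def IsTP {d : ℕ} (T : MatEnd d) : Prop := ∀ X, (T X).trace = X.trace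

/-- Positive map: maps PSD matrices to PSD matrices. -/
def IsPos {d : ℕ} (T : MatEnd d) : Prop := ∀ X, X.PosSemidef → (T X).PosSemidef

/-- Hermiticity-preserving map. -/
def IsHP {d : ℕ} (T : MatEnd d) : Prop := ∀ X, (T X)ᴴ = T Xᴴ

/-- Induced 1→1 norm: `sup_{X ≠ 0} ‖T X‖₁ / ‖X‖₁`. -/
noncomputable def norm1to1 {d : ℕ} (T : MatEnd d) : ℝ :=
  sSup {r | ∃ X, X ≠ 0 ∧ r = traceNorm (T X) / traceNorm X}

/-- Trace-norm contraction coefficient: sup over nonzero Hermitian traceless `σ`. -/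
noncomputable def tau {d : ℕ} (T : MatEnd d) : ℝ :=
  sSup {r | ∃ σ : Matrix (Fin d) (Fin d) ℂ,
    σ.IsHermitian ∧ σ.trace = 0 ∧ σ ≠ 0 ∧ r = traceNorm (T σ) / traceNorm σ}

/-- Density matrix: positive semidefinite with unit trace. -/
def IsDensity {d : ℕ} (ρ : Matrix (Fin d) (Fin d) ℂ) : Prop := ρ.PosSemidef ∧ ρ.trace = 1

/-- `Tinf` is the Cesàro-mean fixed point projection of `T`. -/
def IsCesaroProj {d : ℕ} (T Tinf : MatEnd d) : Prop :=
  ∀ X, Tendsto (fun n : ℕ => (n : ℂ)⁻¹ • ∑ k ∈ Finset.range n, (T ^ (k + 1)) X)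
    atTop (nhds (Tinf X))

/-!
A Cesàro limit `y` of `x` under `T` is fixed by `T`: applying `T` shifts the `n`-th mean by
`n⁻¹ (T^(n+1) x - T x)`, and `n⁻¹ T^(n+1) x` is, up to the factor `1 + 1/n`, a difference of
consecutive means, so it tends to zero. Hence `T₁ T₁^∞ = T₁^∞ T₁^∞ = T₁^∞`, so `1 - (T₁ - T₁^∞)`
sends `T₁^∞ ρ₂ - ρ₂` to `T₁ ρ₂ - ρ₂ = (T₁ - T₂) ρ₂`, and `Z` is its left inverse.
-/

open Finset Topology

section Cesaro

variable {𝕜 E : Type*} [RCLike 𝕜] [AddCommGroup E] [Module 𝕜 E]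

def cesaroMean (T : Module.End 𝕜 E) (x : E) (n : ℕ) : E :=
  (n : 𝕜)⁻¹ • ∑ k ∈ range n, (T ^ (k + 1)) x

lemma cesaroMean_succ_sub {T : Module.End 𝕜 E} {x : E} {n : ℕ} (hn : n ≠ 0) :
    (1 + (n : 𝕜)⁻¹) • cesaroMean T x (n + 1) - cesaroMean T x n =
      (n : 𝕜)⁻¹ • (T ^ (n + 1)) x := by
  have hn' : (n : 𝕜) ≠ 0 := Nat.cast_ne_zero.2 hn
  have hcoef : (1 + (n : 𝕜)⁻¹) * ((n + 1 : ℕ) : 𝕜)⁻¹ = (n : 𝕜)⁻¹ := by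
    push_cast
    field_simp
  simp only [cesaroMean, smul_smul, hcoef, sum_range_succ, smul_add, add_sub_cancel_left]

lemma apply_cesaroMean (T : Module.End 𝕜 E) (x : E) (n : ℕ) :
    T (cesaroMean T x n) = cesaroMean T x n + (n : 𝕜)⁻¹ • ((T ^ (n + 1)) x - T x) := by
  have hshift : ∑ k ∈ range n, T ((T ^ (k + 1)) x) =
      ∑ k ∈ range n, (T ^ (k + 1)) x + (T ^ (n + 1)) x - T x := by
    rw [← sum_range_succ, sum_range_succ', pow_one]
    simp only [pow_succ' T, Module.End.mul_apply, add_sub_cancel_right]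
  rw [cesaroMean, map_smul, map_sum, hshift, add_sub_assoc, smul_add]

lemma cesaroMean_eq_self_of_apply_eq {T : Module.End 𝕜 E} {y : E} (hy : T y = y) {n : ℕ}
    (hn : n ≠ 0) : cesaroMean T y n = y := by
  have hpow : ∀ k : ℕ, (T ^ k) y = y := fun k =>
    (T.pow_apply k y).trans (Function.iterate_fixed hy k)
  simp only [cesaroMean, hpow, sum_const, card_range, ← Nat.cast_smul_eq_nsmul 𝕜, smul_smul,
    inv_mul_cancel₀ (Nat.cast_ne_zero.2 hn : (n : 𝕜) ≠ 0), one_smul]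

variable [TopologicalSpace E] [IsTopologicalAddGroup E] [ContinuousSMul 𝕜 E]

lemma tendsto_inv_smul_pow_apply {T : Module.End 𝕜 E} {x y : E}
    (h : Tendsto (cesaroMean T x) atTop (𝓝 y)) :
    Tendsto (fun n : ℕ => (n : 𝕜)⁻¹ • (T ^ (n + 1)) x) atTop (𝓝 0) := by
  have hcoef : Tendsto (fun n : ℕ => 1 + (n : 𝕜)⁻¹) atTop (𝓝 1) := by
    simpa using tendsto_const_nhds.add (tendsto_inv_atTop_nhds_zero_nat (𝕜 := 𝕜))
  have hlim := (hcoef.smul (h.comp (tendsto_add_atTop_nat 1))).sub h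
  rw [one_smul, sub_self] at hlim
  refine hlim.congr' ?_
  filter_upwards [eventually_ne_atTop 0] with n hn
  exact cesaroMean_succ_sub hn

lemma apply_eq_of_tendsto_cesaroMean [T2Space E] {T : Module.End 𝕜 E} (hT : Continuous T)
    {x y : E} (h : Tendsto (cesaroMean T x) atTop (𝓝 y)) : T y = y := by
  have hvanish : Tendsto (fun n : ℕ => (n : 𝕜)⁻¹ • ((T ^ (n + 1)) x - T x)) atTop (𝓝 0) := by
    simpa [smul_sub] using (tendsto_inv_smul_pow_apply h).sub
      ((tendsto_inv_atTop_nhds_zero_nat (𝕜 := 𝕜)).smul_const (T x))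
  refine tendsto_nhds_unique ((hT.tendsto y).comp h) ?_
  simpa [Function.comp_def, apply_cesaroMean] using h.add hvanish

end Cesaro

namespace IsCesaroProj

variable {d : ℕ} {T Tinf : MatEnd d}

lemma apply_proj (hinf : IsCesaroProj T Tinf) (X : Matrix (Fin d) (Fin d) ℂ) :
    T (Tinf X) = Tinf X :=
  apply_eq_of_tendsto_cesaroMean T.continuous_of_finiteDimensional (hinf X)

lemma proj_apply_proj (hinf : IsCesaroProj T Tinf) (X : Matrix (Fin d) (Fin d) ℂ) :
    Tinf (Tinf X) = Tinf X := by
  refine tendsto_nhds_unique (hinf (Tinf X)) (tendsto_const_nhds.congr' ?_)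
  filter_upwards [eventually_ne_atTop 0] with n hn
  exact (cesaroMean_eq_self_of_apply_eq (hinf.apply_proj X) hn).symm

end IsCesaroProj

theorem fixed_point_identity_general {d : ℕ} (T₁ T₂ Tinf Z : MatEnd d)
    (hinf : IsCesaroProj T₁ Tinf)
    (hZ₁ : Z * (1 - (T₁ - Tinf)) = 1)
    (ρ₂ : Matrix (Fin d) (Fin d) ℂ) (hfix₂ : T₂ ρ₂ = ρ₂) :
    Tinf ρ₂ - ρ₂ = Z ((T₁ - T₂) ρ₂) := by
  have hresolvent : (1 - (T₁ - Tinf)) (Tinf ρ₂ - ρ₂) = (T₁ - T₂) ρ₂ := by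
    simp only [LinearMap.sub_apply, Module.End.one_apply, map_sub, hinf.apply_proj,
      hinf.proj_apply_proj, hfix₂]
    abel
  rw [← hresolvent, ← Module.End.mul_apply, hZ₁, Module.End.one_apply]

/-- the fundamental identity `ρ₁ − ρ₂ = Z(T₁)((T₁ − T₂)(ρ₂))`. -/
theorem fixed_point_identity {d : ℕ} (T₁ T₂ Tinf Z : MatEnd d)
    (h₁TP : IsTP T₁) (h₁Pos : IsPos T₁) (h₂TP : IsTP T₂) (h₂Pos : IsPos T₂)
    (hinf : IsCesaroProj T₁ Tinf)
    (hZ₁ : Z * (1 - (T₁ - Tinf)) = 1) (hZ₂ : (1 - (T₁ - Tinf)) * Z = 1)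
    (ρ₂ : Matrix (Fin d) (Fin d) ℂ) (hρ₂ : IsDensity ρ₂) (hfix₂ : T₂ ρ₂ = ρ₂) :
    Tinf ρ₂ - ρ₂ = Z ((T₁ - T₂) ρ₂) :=
  fixed_point_identity_general T₁ T₂ Tinf Z hinf hZ₁ ρ₂ hfix₂
end

section
/- Let T, E be positive trace-preserving linear maps on M_d(ℂ), ρ₀, σ₀ density matrices, ρ_n = Tⁿ(ρ₀), σ_n = Eⁿ(σ₀). Then ‖ρ_n − σ_n‖₁ ≤ τ(Tⁿ)·‖ρ₀ − σ₀‖₁ + ‖E − T‖_{1→1} · Σ_{i=0}^{n−1} τ(Tⁱ). -/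
open Matrix Filter
open scoped ComplexOrder

/-!
Telescoping `Tⁿ - Eⁿ = ∑ Tⁱ (T - E) Eⁿ⁻¹⁻ⁱ` splits `ρₙ - σₙ` into `Tⁿ (ρ₀ - σ₀)` and the terms
`Tⁱ ((T - E) σₙ₋₁₋ᵢ)`. Each of these is a power of `T` applied to a Hermitian traceless matrix,
so `τ` controls it, and `‖(T - E) σⱼ‖₁ ≤ ‖E - T‖₁→₁` because `σⱼ` is again a density matrix.
The terms are recombined by the triangle inequality for the trace norm on Hermitian matrices,
which comes from the duality `‖A‖₁ = Re tr (sign(A) A)` together with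
`|Re tr (S P)| ≤ tr P` for `P ⪰ 0` and any Hermitian `S` with spectrum in `[-1, 1]`.
-/

theorem pow_sub_pow_eq_sum {R : Type*} [Ring R] (a b : R) (n : ℕ) :
    a ^ n - b ^ n = ∑ i ∈ Finset.range n, a ^ i * (a - b) * b ^ (n - 1 - i) := by
  induction n with
  | zero => simp
  | succ n ih =>
    have hshift : ∀ i ∈ Finset.range n, a ^ (i + 1) * (a - b) * b ^ (n + 1 - 1 - (i + 1))
        = a * (a ^ i * (a - b) * b ^ (n - 1 - i)) := fun i _ => by
      rw [pow_succ', show n + 1 - 1 - (i + 1) = n - 1 - i by omega]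
      simp only [mul_assoc]
    rw [Finset.sum_range_succ', Finset.sum_congr rfl hshift, ← Finset.mul_sum, ← ih,
      Nat.add_sub_cancel, Nat.sub_zero, pow_zero, one_mul, pow_succ' a, pow_succ' b]
    noncomm_ring

namespace Matrix

theorem isHermitian_sum {ι n α : Type*} [AddCommMonoid α] [StarAddMonoid α] (s : Finset ι)
    {A : ι → Matrix n n α} (hA : ∀ i ∈ s, (A i).IsHermitian) : (∑ i ∈ s, A i).IsHermitian :=
  isHermitian_iff_isSelfAdjoint.mpr (isSelfAdjoint_sum s fun i hi => (hA i hi).isSelfAdjoint)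

namespace IsHermitian

variable {n 𝕜 : Type*} [Fintype n] [DecidableEq n] [RCLike 𝕜] {A : Matrix n n 𝕜}

lemma cfc_eq_mul_diagonal_mul_star (hA : A.IsHermitian) (f : ℝ → ℝ) :
    cfc f A = (hA.eigenvectorUnitary : Matrix n n 𝕜) *
      diagonal (RCLike.ofReal ∘ f ∘ hA.eigenvalues) *
        star (hA.eigenvectorUnitary : Matrix n n 𝕜) := by
  rw [hA.cfc_eq, IsHermitian.cfc, Unitary.conjStarAlgAut_apply]

lemma trace_cfc (hA : A.IsHermitian) (f : ℝ → ℝ) :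
    (cfc f A).trace = ∑ i, (f (hA.eigenvalues i) : 𝕜) := by
  rw [hA.cfc_eq_mul_diagonal_mul_star, trace_mul_cycle, UnitaryGroup.star_mul_self, one_mul,
    trace_diagonal]
  rfl

lemma posSemidef_cfc (hA : A.IsHermitian) {f : ℝ → ℝ} (hf : ∀ x, 0 ≤ f x) :
    (cfc f A).PosSemidef := by
  rw [hA.cfc_eq_mul_diagonal_mul_star, star_eq_conjTranspose]
  exact PosSemidef.mul_mul_conjTranspose_same
    (posSemidef_diagonal_iff.mpr fun _ => RCLike.ofReal_nonneg.mpr (hf _)) _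

lemma eq_cfc_posPart_sub_cfc_negPart (hA : A.IsHermitian) :
    A = cfc (fun x : ℝ => x⁺) A - cfc (fun x : ℝ => x⁻) A := by
  rw [← cfc_sub .., cfc_congr fun x _ => posPart_sub_negPart x, cfc_id' ℝ A hA.isSelfAdjoint]

lemma abs_re_trace_cfc_mul_le (hA : A.IsHermitian) {f : ℝ → ℝ} (hf : ∀ x, |f x| ≤ 1)
    {P : Matrix n n 𝕜} (hP : P.PosSemidef) :
    |RCLike.re (cfc f A * P).trace| ≤ RCLike.re P.trace := by
  set U : Matrix n n 𝕜 := ↑hA.eigenvectorUnitary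
  set Q := star U * P * U
  have hQ : ∀ i, 0 ≤ RCLike.re (Q i i) := fun i =>
    (RCLike.nonneg_iff.mp (hP.conjTranspose_mul_mul_same U).diag_nonneg).1
  have hPQ : P.trace = Q.trace := by
    rw [trace_mul_cycle, Unitary.mul_star_self_of_mem hA.eigenvectorUnitary.2, one_mul]
  have hSP : (cfc f A * P).trace = ∑ i, (f (hA.eigenvalues i) : 𝕜) * Q i i := by
    rw [hA.cfc_eq_mul_diagonal_mul_star, Matrix.mul_assoc, Matrix.mul_assoc, trace_mul_comm,
      Matrix.mul_assoc, Matrix.mul_assoc]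
    simp [trace, diagonal_mul, Q, U, Matrix.mul_assoc]
  rw [hSP, hPQ, trace, map_sum, map_sum]
  simp_rw [RCLike.re_ofReal_mul]
  refine (Finset.abs_sum_le_sum_abs _ _).trans (Finset.sum_le_sum fun i _ => ?_)
  rw [abs_mul, abs_of_nonneg (hQ i)]
  exact mul_le_of_le_one_left (hQ i) (hf _)

end IsHermitian

end Matrix

section TraceNorm

variable {d : ℕ}

lemma traceNorm_eq_re_trace_cfc_sqrt (X : Matrix (Fin d) (Fin d) ℂ) :
    traceNorm X = (cfc Real.sqrt (Xᴴ * X)).trace.re := by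
  rw [(posSemidef_conjTranspose_mul_self X).1.cfc_eq_mul_diagonal_mul_star]
  rfl

lemma traceNorm_eq_sum_sqrt_eigenvalues (X : Matrix (Fin d) (Fin d) ℂ) :
    traceNorm X = ∑ i, √((posSemidef_conjTranspose_mul_self X).1.eigenvalues i) := by
  rw [traceNorm_eq_re_trace_cfc_sqrt, IsHermitian.trace_cfc, Complex.re_sum]
  rfl

lemma traceNorm_nonneg (X : Matrix (Fin d) (Fin d) ℂ) : 0 ≤ traceNorm X := by
  rw [traceNorm_eq_sum_sqrt_eigenvalues]
  positivity

lemma traceNorm_neg (X : Matrix (Fin d) (Fin d) ℂ) : traceNorm (-X) = traceNorm X := by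
  simp [traceNorm_eq_re_trace_cfc_sqrt]

section Frobenius

attribute [local instance] Matrix.frobeniusSeminormedAddCommGroup
  Matrix.frobeniusNormedAddCommGroup Matrix.frobeniusNormedSpace

lemma Matrix.frobenius_norm_sq_eq_re_trace {m n 𝕜 : Type*} [Fintype m] [Fintype n] [RCLike 𝕜]
    (A : Matrix m n 𝕜) : ‖A‖ ^ 2 = RCLike.re (Aᴴ * A).trace := by
  rw [frobenius_norm_def, ← Real.sqrt_eq_rpow, Real.sq_sqrt (by positivity), trace, map_sum,
    Finset.sum_comm]
  refine Finset.sum_congr rfl fun j _ => ?_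
  simp only [Real.rpow_two, diag_apply, mul_apply, conjTranspose_apply, RCLike.star_def,
    RCLike.conj_mul, map_sum]
  norm_cast

lemma frobenius_norm_sq_eq_sum_sq_sqrt_eigenvalues (X : Matrix (Fin d) (Fin d) ℂ) :
    ‖X‖ ^ 2 = ∑ i, √((posSemidef_conjTranspose_mul_self X).1.eigenvalues i) ^ 2 := by
  have hX := posSemidef_conjTranspose_mul_self X
  rw [frobenius_norm_sq_eq_re_trace, hX.isHermitian.trace_eq_sum_eigenvalues, map_sum]
  simp [Real.sq_sqrt (hX.eigenvalues_nonneg _)]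

lemma frobenius_norm_le_traceNorm (X : Matrix (Fin d) (Fin d) ℂ) : ‖X‖ ≤ traceNorm X := by
  rw [← sq_le_sq₀ (norm_nonneg X) (traceNorm_nonneg X),
    frobenius_norm_sq_eq_sum_sq_sqrt_eigenvalues, traceNorm_eq_sum_sqrt_eigenvalues]
  exact Finset.sum_sq_le_sq_sum_of_nonneg fun i _ => Real.sqrt_nonneg _

lemma traceNorm_le_sqrt_mul_frobenius_norm (X : Matrix (Fin d) (Fin d) ℂ) :
    traceNorm X ≤ √d * ‖X‖ := by
  rw [← sq_le_sq₀ (traceNorm_nonneg X) (by positivity), mul_pow, Real.sq_sqrt d.cast_nonneg,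
    frobenius_norm_sq_eq_sum_sq_sqrt_eigenvalues, traceNorm_eq_sum_sqrt_eigenvalues]
  simpa using sq_sum_le_card_mul_sum_sq (s := Finset.univ)
    (f := fun i => √((posSemidef_conjTranspose_mul_self X).1.eigenvalues i))

lemma traceNorm_pos {X : Matrix (Fin d) (Fin d) ℂ} (hX : X ≠ 0) : 0 < traceNorm X :=
  (norm_pos_iff.mpr hX).trans_le (frobenius_norm_le_traceNorm X)

lemma traceNorm_zero : traceNorm (0 : Matrix (Fin d) (Fin d) ℂ) = 0 :=
  le_antisymm (by simpa using traceNorm_le_sqrt_mul_frobenius_norm (0 : Matrix (Fin d) (Fin d) ℂ))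
    (traceNorm_nonneg 0)

lemma exists_traceNorm_apply_le (L : MatEnd d) :
    ∃ C, ∀ X, traceNorm (L X) ≤ C * traceNorm X := by
  obtain ⟨C, hC, hL⟩ := (LinearMap.toContinuousLinearMap L).bound
  refine ⟨√d * C, fun X => ?_⟩
  calc traceNorm (L X) ≤ √d * ‖L X‖ := traceNorm_le_sqrt_mul_frobenius_norm _
    _ ≤ √d * (C * traceNorm X) := by
        gcongr
        exact (hL X).trans (by gcongr; exact frobenius_norm_le_traceNorm X)
    _ = √d * C * traceNorm X := by ring

end Frobenius

lemma Matrix.IsHermitian.traceNorm_eq_re_trace_cfc_abs {A : Matrix (Fin d) (Fin d) ℂ}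
    (hA : A.IsHermitian) : traceNorm A = (cfc (|·| : ℝ → ℝ) A).trace.re := by
  have hsq : Aᴴ * A = cfc (· ^ 2 : ℝ → ℝ) A := by
    rw [cfc_pow_id A 2 hA.isSelfAdjoint, hA.eq, sq]
  rw [traceNorm_eq_re_trace_cfc_sqrt, hsq, ← cfc_comp Real.sqrt (· ^ 2) A hA.isSelfAdjoint]
  simp only [Function.comp_def, Real.sqrt_sq_eq_abs]

lemma Matrix.PosSemidef.traceNorm_eq_re_trace {A : Matrix (Fin d) (Fin d) ℂ}
    (hA : A.PosSemidef) : traceNorm A = A.trace.re := by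
  rw [hA.isHermitian.traceNorm_eq_re_trace_cfc_abs, hA.isHermitian.trace_cfc,
    hA.isHermitian.trace_eq_sum_eigenvalues]
  simp [abs_of_nonneg (hA.eigenvalues_nonneg _)]

lemma Matrix.IsHermitian.re_trace_cfc_mul_le_traceNorm {A C : Matrix (Fin d) (Fin d) ℂ}
    (hA : A.IsHermitian) (hC : C.IsHermitian) {f : ℝ → ℝ} (hf : ∀ x, |f x| ≤ 1) :
    (cfc f C * A).trace.re ≤ traceNorm A := by
  set P := cfc (fun x : ℝ => x⁺) A
  set N := cfc (fun x : ℝ => x⁻) A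
  have hP := hC.abs_re_trace_cfc_mul_le hf (hA.posSemidef_cfc fun x => posPart_nonneg x)
  have hN := hC.abs_re_trace_cfc_mul_le hf (hA.posSemidef_cfc fun x => negPart_nonneg x)
  have habs : cfc (|·| : ℝ → ℝ) A = P + N := by
    rw [← cfc_add .., cfc_congr fun x _ => (posPart_add_negPart x).symm]
  simp only [RCLike.re_to_complex] at hP hN
  calc (cfc f C * A).trace.re = (cfc f C * P).trace.re - (cfc f C * N).trace.re := by
        conv_lhs => rw [hA.eq_cfc_posPart_sub_cfc_negPart]
        rw [Matrix.mul_sub, trace_sub, Complex.sub_re]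
    _ ≤ P.trace.re + N.trace.re := by
        linarith [le_abs_self (cfc f C * P).trace.re, neg_abs_le (cfc f C * N).trace.re]
    _ = traceNorm A := by rw [hA.traceNorm_eq_re_trace_cfc_abs, habs, trace_add, Complex.add_re]

lemma traceNorm_add_le {A B : Matrix (Fin d) (Fin d) ℂ} (hA : A.IsHermitian)
    (hB : B.IsHermitian) : traceNorm (A + B) ≤ traceNorm A + traceNorm B := by
  have hAB : (A + B).IsHermitian := hA.add hB
  have hsign : ∀ x : ℝ, |(SignType.sign x : ℝ)| ≤ 1 := fun x => by
    rcases lt_trichotomy x 0 with h | h | h <;> simp [h]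
  have hnorm : traceNorm (A + B) =
      (cfc (fun x : ℝ => (SignType.sign x : ℝ)) (A + B) * (A + B)).trace.re := by
    rw [hAB.traceNorm_eq_re_trace_cfc_abs, cfc_congr fun x _ => (sign_mul_self x).symm,
      cfc_mul _ _ _ ((A + B).finite_real_spectrum.continuousOn _), cfc_id' ℝ (A + B)]
  rw [hnorm, Matrix.mul_add, trace_add, Complex.add_re]
  exact add_le_add (hA.re_trace_cfc_mul_le_traceNorm hAB hsign)
    (hB.re_trace_cfc_mul_le_traceNorm hAB hsign)

lemma traceNorm_sum_le {ι : Type*} (s : Finset ι) {A : ι → Matrix (Fin d) (Fin d) ℂ}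
    (hA : ∀ i ∈ s, (A i).IsHermitian) : traceNorm (∑ i ∈ s, A i) ≤ ∑ i ∈ s, traceNorm (A i) := by
  classical
  induction s using Finset.induction_on with
  | empty => simp [traceNorm_zero]
  | insert a s ha ih =>
    rw [Finset.forall_mem_insert] at hA
    rw [Finset.sum_insert ha, Finset.sum_insert ha]
    exact (traceNorm_add_le hA.1 (isHermitian_sum s hA.2)).trans (add_le_add le_rfl (ih hA.2))

end TraceNorm

section Superoperator

variable {d : ℕ}

lemma traceNorm_apply_le_mul_of_ratio_le {L : MatEnd d} {X : Matrix (Fin d) (Fin d) ℂ} {c : ℝ}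
    (h : X ≠ 0 → traceNorm (L X) / traceNorm X ≤ c) : traceNorm (L X) ≤ c * traceNorm X := by
  rcases eq_or_ne X 0 with rfl | hX
  · simp [traceNorm_zero]
  · exact (div_le_iff₀ (traceNorm_pos hX)).mp (h hX)

-- `sSup` of a set of reals that is not bounded above is `0`, so this bound is what makes
-- `norm1to1` and `tau` genuine suprema.
lemma bddAbove_traceNorm_ratio (L : MatEnd d) :
    BddAbove {r | ∃ X, X ≠ 0 ∧ r = traceNorm (L X) / traceNorm X} := by
  obtain ⟨C, hC⟩ := exists_traceNorm_apply_le L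
  refine ⟨C, ?_⟩
  rintro r ⟨X, hX, rfl⟩
  exact (div_le_iff₀ (traceNorm_pos hX)).mpr (hC X)

lemma traceNorm_apply_le_norm1to1_mul (L : MatEnd d) (X : Matrix (Fin d) (Fin d) ℂ) :
    traceNorm (L X) ≤ norm1to1 L * traceNorm X :=
  traceNorm_apply_le_mul_of_ratio_le fun hX => le_csSup (bddAbove_traceNorm_ratio L) ⟨X, hX, rfl⟩

lemma traceNorm_apply_le_tau_mul (L : MatEnd d) {σ : Matrix (Fin d) (Fin d) ℂ}
    (hσ : σ.IsHermitian) (htr : σ.trace = 0) : traceNorm (L σ) ≤ tau L * traceNorm σ := by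
  have hbdd : BddAbove {r | ∃ Y : Matrix (Fin d) (Fin d) ℂ,
      Y.IsHermitian ∧ Y.trace = 0 ∧ Y ≠ 0 ∧ r = traceNorm (L Y) / traceNorm Y} :=
    (bddAbove_traceNorm_ratio L).mono fun _ ⟨Y, _, _, hY, hr⟩ => (⟨Y, hY, hr⟩ : ∃ X, _)
  exact traceNorm_apply_le_mul_of_ratio_le fun hσ₀ => le_csSup hbdd ⟨σ, hσ, htr, hσ₀, rfl⟩

lemma tau_nonneg (L : MatEnd d) : 0 ≤ tau L :=
  Real.sSup_nonneg fun _ ⟨_, _, _, _, hr⟩ =>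
    hr ▸ div_nonneg (traceNorm_nonneg _) (traceNorm_nonneg _)

lemma IsPos.pow {T : MatEnd d} (hT : IsPos T) (n : ℕ) : IsPos (T ^ n) := by
  induction n with
  | zero => exact fun X hX => hX
  | succ n ih => exact fun X hX => ih _ (hT X hX)

lemma IsTP.pow {T : MatEnd d} (hT : IsTP T) (n : ℕ) : IsTP (T ^ n) := by
  induction n with
  | zero => exact fun X => rfl
  | succ n ih => exact fun X => (ih _).trans (hT X)

lemma IsPos.isHermitian_map {T : MatEnd d} (hT : IsPos T) {A : Matrix (Fin d) (Fin d) ℂ}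
    (hA : A.IsHermitian) : (T A).IsHermitian := by
  rw [hA.eq_cfc_posPart_sub_cfc_negPart, map_sub]
  exact (hT _ (hA.posSemidef_cfc fun x => posPart_nonneg x)).isHermitian.sub
    (hT _ (hA.posSemidef_cfc fun x => negPart_nonneg x)).isHermitian

lemma IsPos.isHermitian_sub_apply {T E : MatEnd d} (hT : IsPos T) (hE : IsPos E)
    {A : Matrix (Fin d) (Fin d) ℂ} (hA : A.IsHermitian) : ((T - E) A).IsHermitian :=
  (hT.isHermitian_map hA).sub (hE.isHermitian_map hA)

lemma IsDensity.map {T : MatEnd d} (hTTP : IsTP T) (hTPos : IsPos T)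
    {ρ : Matrix (Fin d) (Fin d) ℂ} (hρ : IsDensity ρ) : IsDensity (T ρ) :=
  ⟨hTPos ρ hρ.1, (hTTP ρ).trans hρ.2⟩

lemma IsDensity.traceNorm_eq_one {ρ : Matrix (Fin d) (Fin d) ℂ} (hρ : IsDensity ρ) :
    traceNorm ρ = 1 := by
  rw [hρ.1.traceNorm_eq_re_trace, hρ.2, Complex.one_re]

lemma IsDensity.isHermitian_sub {ρ σ : Matrix (Fin d) (Fin d) ℂ} (hρ : IsDensity ρ)
    (hσ : IsDensity σ) : (ρ - σ).IsHermitian := hρ.1.isHermitian.sub hσ.1.isHermitian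

lemma IsDensity.trace_sub {ρ σ : Matrix (Fin d) (Fin d) ℂ} (hρ : IsDensity ρ)
    (hσ : IsDensity σ) : (ρ - σ).trace = 0 := by
  rw [Matrix.trace_sub, hρ.2, hσ.2, sub_self]

lemma traceNorm_apply_sub_apply_le {T E : MatEnd d} (hTTP : IsTP T) (hTPos : IsPos T)
    (hETP : IsTP E) (hEPos : IsPos E) (S : MatEnd d) {ρ : Matrix (Fin d) (Fin d) ℂ}
    (hρ : IsDensity ρ) : traceNorm (S ((T - E) ρ)) ≤ tau S * norm1to1 (E - T) := by
  have hherm : ((T - E) ρ).IsHermitian := hTPos.isHermitian_sub_apply hEPos hρ.1.isHermitian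
  have htr : ((T - E) ρ).trace = 0 := by
    rw [LinearMap.sub_apply, trace_sub, hTTP, hETP, sub_self]
  calc traceNorm (S ((T - E) ρ)) ≤ tau S * traceNorm ((T - E) ρ) :=
        traceNorm_apply_le_tau_mul S hherm htr
    _ = tau S * traceNorm ((E - T) ρ) := by rw [← neg_sub E T, LinearMap.neg_apply, traceNorm_neg]
    _ ≤ tau S * norm1to1 (E - T) := by
        gcongr
        · exact tau_nonneg S
        · simpa [hρ.traceNorm_eq_one] using traceNorm_apply_le_norm1to1_mul (E - T) ρ

end Superoperator

/-- finite-time perturbation bound in terms of contraction coefficients. -/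
theorem finite_time_bound {d : ℕ} (T E : MatEnd d)
    (hTTP : IsTP T) (hTPos : IsPos T) (hETP : IsTP E) (hEPos : IsPos E)
    (ρ₀ σ₀ : Matrix (Fin d) (Fin d) ℂ) (hρ₀ : IsDensity ρ₀) (hσ₀ : IsDensity σ₀) :
    ∀ n : ℕ, traceNorm ((T ^ n) ρ₀ - (E ^ n) σ₀) ≤
      tau (T ^ n) * traceNorm (ρ₀ - σ₀) +
        norm1to1 (E - T) * ∑ i ∈ Finset.range n, tau (T ^ i) := by
  intro n
  set defect : ℕ → Matrix (Fin d) (Fin d) ℂ := fun i => (T ^ i) ((T - E) ((E ^ (n - 1 - i)) σ₀))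
  have hσ : ∀ i, IsDensity ((E ^ i) σ₀) := fun i => hσ₀.map (hETP.pow i) (hEPos.pow i)
  have htelescope : (T ^ n) σ₀ - (E ^ n) σ₀ = ∑ i ∈ Finset.range n, defect i := by
    rw [← LinearMap.sub_apply, pow_sub_pow_eq_sum, LinearMap.sum_apply]
    rfl
  have hdefect : ∀ i ∈ Finset.range n, (defect i).IsHermitian := fun i _ =>
    (hTPos.pow i).isHermitian_map (hTPos.isHermitian_sub_apply hEPos (hσ _).1.isHermitian)
  have hinit : ((T ^ n) (ρ₀ - σ₀)).IsHermitian :=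
    (hTPos.pow n).isHermitian_map (hρ₀.isHermitian_sub hσ₀)
  calc traceNorm ((T ^ n) ρ₀ - (E ^ n) σ₀)
      = traceNorm ((T ^ n) (ρ₀ - σ₀) + ∑ i ∈ Finset.range n, defect i) := by
        rw [map_sub, ← htelescope, sub_add_sub_cancel]
    _ ≤ traceNorm ((T ^ n) (ρ₀ - σ₀)) + ∑ i ∈ Finset.range n, traceNorm (defect i) :=
        (traceNorm_add_le hinit (Matrix.isHermitian_sum _ hdefect)).trans
          (add_le_add le_rfl (traceNorm_sum_le _ hdefect))
    _ ≤ tau (T ^ n) * traceNorm (ρ₀ - σ₀)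
        + ∑ i ∈ Finset.range n, norm1to1 (E - T) * tau (T ^ i) := by
        gcongr with i
        · exact traceNorm_apply_le_tau_mul _ (hρ₀.isHermitian_sub hσ₀) (hρ₀.trace_sub hσ₀)
        · rw [mul_comm]
          exact traceNorm_apply_sub_apply_le hTTP hTPos hETP hEPos _ (hσ _)
    _ = _ := by rw [Finset.mul_sum]
end
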